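/- In any ontological model for ℂ² with D injective, for every unit vector ψ ∈ ℂ²: ρ₁({λ ∈ Λ : 0 < p_{P_ψ}(λ) < 1}) = 0, where ρ₁ := 2·D⁻¹(½I); that is, with respect to ρ₁, almost every ontic state responds deterministically (with probability 0 or 1) to a measurement of the projection P_ψ. -/

import Mathlib

/-!
Write `P = P_ψ`. Since `ℂ²` is two-dimensional, both `P` and `I - P` are density matrices; prepare
them by `ρψ` and `ρφ`. The statistics `∫ p_A dρ = tr (D ρ · A)` on rank-one projections determine
`D ρ` by polarization and are affine in `ρ`, so `D` is affine on `𝒞`: hence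
`D (½ ρψ + ½ ρφ) = ½ I`, and injectivity gives `½ ρψ + ½ ρφ = D⁻¹(½ I)`. Finally
`∫ p_P dρψ = tr (P P) = 1` and `∫ p_P dρφ = tr ((I - P) P) = 0` force `p_P = 1` `ρψ`-a.e. and
`p_P = 0` `ρφ`-a.e.
-/

open MeasureTheory
open scoped NNReal ENNReal ComplexOrder

noncomputable section

/-- The rank-one projection `|ψ⟩⟨ψ|` associated with a vector `ψ ∈ ℂⁿ`. -/
def proj {n : ℕ} (ψ : EuclideanSpace ℂ (Fin n)) : Matrix (Fin n) (Fin n) ℂ :=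
  Matrix.of fun i j => ψ i * (starRingEnd ℂ) (ψ j)

/-- An ontological model for `ℂⁿ`: a measurable space `Λ` of ontic states, a convex set `C`
of preparable probability measures on `Λ`, measurable response functions `p A : Λ → [0,1]`
for each effect `A` (`0 ≤ A ≤ 1` in the Loewner order), and a map `D` from `C` onto the set
of density matrices reproducing the quantum statistics. -/
structure OntModel (n : ℕ) (Λ : Type*) [MeasurableSpace Λ] where
  C : Set (Measure Λ)
  prob : ∀ ρ ∈ C, IsProbabilityMeasure ρ
  convexC : ∀ ρa ∈ C, ∀ ρb ∈ C, ∀ s : ℝ≥0, s ≤ 1 → s • ρa + (1 - s) • ρb ∈ C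
  p : Matrix (Fin n) (Fin n) ℂ → Λ → ℝ
  p_meas : ∀ A, Measurable (p A)
  p_nonneg : ∀ A l, 0 ≤ p A l
  p_le_one : ∀ A l, p A l ≤ 1
  D : Measure Λ → Matrix (Fin n) (Fin n) ℂ
  D_psd : ∀ ρ ∈ C, (D ρ).PosSemidef
  D_trace : ∀ ρ ∈ C, (D ρ).trace = 1
  D_surj : ∀ W : Matrix (Fin n) (Fin n) ℂ, W.PosSemidef → W.trace = 1 → ∃ ρ ∈ C, D ρ = W
  agree : ∀ ρ ∈ C, ∀ A : Matrix (Fin n) (Fin n) ℂ, A.PosSemidef → (1 - A).PosSemidef →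
    ((∫ l, p A l ∂ρ : ℝ) : ℂ) = (D ρ * A).trace

open Matrix

lemma Matrix.PosSemidef.of_isHermitian_of_mul_self {m R : Type*} [Fintype m] [Ring R]
    [PartialOrder R] [StarRing R] [StarOrderedRing R] {A : Matrix m m R}
    (hA : A.IsHermitian) (hAA : A * A = A) : A.PosSemidef := by
  rw [← hAA]
  nth_rw 1 [← hA.eq]
  exact posSemidef_conjTranspose_mul_self A

lemma Matrix.ext_of_star_dotProduct_mulVec {m : Type*} [Fintype m] [DecidableEq m]
    {X Y : Matrix m m ℂ} (h : ∀ v : m → ℂ, star v ⬝ᵥ X *ᵥ v = star v ⬝ᵥ Y *ᵥ v) : X = Y := by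
  apply (toLpLin 2 2).injective
  rw [← ext_inner_map]
  intro v
  rw [← inner_conj_symm, ← inner_conj_symm (toLpLin 2 2 Y v)]
  simp only [EuclideanSpace.inner_eq_star_dotProduct, ofLp_toLpLin, toLin'_apply,
    dotProduct_comm _ (star _), h]

def IsEffect {n : ℕ} (A : Matrix (Fin n) (Fin n) ℂ) : Prop :=
  A.PosSemidef ∧ (1 - A).PosSemidef

section proj

variable {n : ℕ}

lemma proj_eq_vecMulVec (v : EuclideanSpace ℂ (Fin n)) : proj v = vecMulVec v (star v) := rfl

lemma trace_mul_proj (X : Matrix (Fin n) (Fin n) ℂ) (v : EuclideanSpace ℂ (Fin n)) :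
    (X * proj v).trace = star (v : Fin n → ℂ) ⬝ᵥ X *ᵥ v := by
  rw [proj_eq_vecMulVec, mul_vecMulVec, trace_vecMulVec, dotProduct_comm]

lemma posSemidef_proj (v : EuclideanSpace ℂ (Fin n)) : (proj v).PosSemidef :=
  posSemidef_vecMulVec_self_star _

lemma star_dotProduct_self_eq_one {v : EuclideanSpace ℂ (Fin n)} (hv : ‖v‖ = 1) :
    star (v : Fin n → ℂ) ⬝ᵥ v = 1 := by
  rw [dotProduct_comm, ← EuclideanSpace.inner_eq_star_dotProduct, inner_self_eq_norm_sq_to_K, hv]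
  simp

lemma trace_proj {v : EuclideanSpace ℂ (Fin n)} (hv : ‖v‖ = 1) : (proj v).trace = 1 := by
  rw [← one_mul (proj v), trace_mul_proj, one_mulVec, star_dotProduct_self_eq_one hv]

lemma proj_mul_self {v : EuclideanSpace ℂ (Fin n)} (hv : ‖v‖ = 1) :
    proj v * proj v = proj v := by
  rw [proj_eq_vecMulVec, vecMulVec_mul_vecMulVec, star_dotProduct_self_eq_one hv, one_smul]

lemma isEffect_proj {v : EuclideanSpace ℂ (Fin n)} (hv : ‖v‖ = 1) : IsEffect (proj v) := by
  refine ⟨posSemidef_proj v, .of_isHermitian_of_mul_self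
    (isHermitian_one.sub (posSemidef_proj v).isHermitian) ?_⟩
  rw [sub_mul, mul_sub, mul_sub, proj_mul_self hv]
  simp

lemma eq_of_trace_mul_proj_eq {X Y : Matrix (Fin n) (Fin n) ℂ}
    (h : ∀ v : EuclideanSpace ℂ (Fin n), ‖v‖ = 1 → (X * proj v).trace = (Y * proj v).trace) :
    X = Y := by
  refine ext_of_star_dotProduct_mulVec fun w => ?_
  obtain rfl | hw := eq_or_ne w 0
  · simp
  set v : EuclideanSpace ℂ (Fin n) := WithLp.toLp 2 w
  have hv : v ≠ 0 := by simpa [v] using hw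
  set c : ℂ := (‖v‖ : ℂ)
  have hc : c ≠ 0 := by simpa [c] using hv
  have hu : ‖c⁻¹ • v‖ = 1 := by
    rw [norm_smul, norm_inv, Complex.norm_real, norm_norm, inv_mul_cancel₀ (norm_ne_zero_iff.2 hv)]
  have hunit := h _ hu
  simp only [trace_mul_proj, WithLp.ofLp_smul, star_smul, mulVec_smul, smul_dotProduct,
    dotProduct_smul, smul_eq_mul] at hunit
  exact mul_left_cancel₀ (star_ne_zero.2 (inv_ne_zero hc)) (mul_left_cancel₀ (inv_ne_zero hc) hunit)

end proj

namespace OntModel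

variable {n : ℕ} {Λ : Type*} [MeasurableSpace Λ] (M : OntModel n Λ) {ρ ρa ρb : Measure Λ}
  {A : Matrix (Fin n) (Fin n) ℂ}

lemma integrable_p (hρ : ρ ∈ M.C) (A : Matrix (Fin n) (Fin n) ℂ) : Integrable (M.p A) ρ :=
  have := M.prob ρ hρ
  .of_bound (M.p_meas A).aestronglyMeasurable 1 <| ae_of_all _ fun l => by
    rw [Real.norm_of_nonneg (M.p_nonneg A l)]; exact M.p_le_one A l

lemma trace_D_mul (hρ : ρ ∈ M.C) (hA : IsEffect A) :
    (M.D ρ * A).trace = ((∫ l, M.p A l ∂ρ : ℝ) : ℂ) :=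
  (M.agree ρ hρ A hA.1 hA.2).symm

-- `D ρ` is determined by the statistics of `ρ` on rank-one projections, which are affine in `ρ`.
lemma D_smul_add_smul (hρa : ρa ∈ M.C) (hρb : ρb ∈ M.C) {s : ℝ≥0} (hs : s ≤ 1) :
    M.D (s • ρa + (1 - s) • ρb) =
      ((s : ℝ) : ℂ) • M.D ρa + (((1 - s : ℝ≥0) : ℝ) : ℂ) • M.D ρb := by
  refine eq_of_trace_mul_proj_eq fun v hv => ?_
  have hA := isEffect_proj hv
  rw [M.trace_D_mul (M.convexC ρa hρa ρb hρb s hs) hA, add_mul, trace_add, smul_mul, smul_mul,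
    trace_smul, trace_smul, M.trace_D_mul hρa hA, M.trace_D_mul hρb hA,
    integral_add_measure (M.integrable_p hρa _).smul_measure_nnreal
      (M.integrable_p hρb _).smul_measure_nnreal,
    integral_smul_nnreal_measure, integral_smul_nnreal_measure]
  simp only [NNReal.smul_def, smul_eq_mul, Complex.ofReal_add, Complex.ofReal_mul]

lemma ae_p_eq_one (hρ : ρ ∈ M.C) (hA : IsEffect A) (h : (M.D ρ * A).trace = 1) :
    ∀ᵐ l ∂ρ, M.p A l = 1 := by
  have := M.prob ρ hρ
  have hint : ∫ l, (1 - M.p A l) ∂ρ = 0 := by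
    rw [M.trace_D_mul hρ hA] at h
    rw [integral_sub (integrable_const 1) (M.integrable_p hρ A), integral_const]
    simp [Complex.ofReal_eq_one.1 h]
  filter_upwards [(integral_eq_zero_iff_of_nonneg (fun l => sub_nonneg.2 (M.p_le_one A l))
    ((integrable_const 1).sub (M.integrable_p hρ A))).1 hint] with l hl
  exact (sub_eq_zero.1 hl).symm

lemma ae_p_eq_zero (hρ : ρ ∈ M.C) (hA : IsEffect A) (h : (M.D ρ * A).trace = 0) :
    ∀ᵐ l ∂ρ, M.p A l = 0 := by
  rw [M.trace_D_mul hρ hA, Complex.ofReal_eq_zero] at h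
  exact (integral_eq_zero_iff_of_nonneg (M.p_nonneg A) (M.integrable_p hρ A)).1 h

end OntModel

/-- In an ontological model for `ℂ²` with `D` injective, for every unit vector `ψ` the
measure `ρ₁ = 2 · D⁻¹(½ I)` gives zero weight to the set of ontic states responding
nondeterministically to a measurement of `P_ψ`. -/
theorem rho1_deterministic {Λ : Type*} [MeasurableSpace Λ] (M : OntModel 2 Λ)
    (hinj : ∀ ρa ∈ M.C, ∀ ρb ∈ M.C, M.D ρa = M.D ρb → ρa = ρb)
    (ψ : EuclideanSpace ℂ (Fin 2)) (hψ : ‖ψ‖ = 1)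
    (ρhalf : Measure Λ) (hρhalf : ρhalf ∈ M.C)
    (hDhalf : M.D ρhalf = (1 / 2 : ℂ) • 1) :
    ((2 : ℝ≥0) • ρhalf) {l | 0 < M.p (proj ψ) l ∧ M.p (proj ψ) l < 1} = 0 := by
  have hP := isEffect_proj hψ
  obtain ⟨ρψ, hρψ, hDψ⟩ := M.D_surj (proj ψ) hP.1 (trace_proj hψ)
  obtain ⟨ρφ, hρφ, hDφ⟩ := M.D_surj (1 - proj ψ) hP.2 (by
    rw [trace_sub, trace_one, trace_proj hψ]; norm_num)
  have hhalf : (1 : ℝ≥0) - 1 / 2 = 1 / 2 := by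
    rw [← NNReal.coe_inj, NNReal.coe_sub (by norm_num)]; norm_num
  have hmix : (1 / 2 : ℝ≥0) • ρψ + (1 - 1 / 2 : ℝ≥0) • ρφ = ρhalf := by
    refine hinj _ (M.convexC ρψ hρψ ρφ hρφ _ (by norm_num)) _ hρhalf ?_
    rw [M.D_smul_add_smul hρψ hρφ (by norm_num), hDψ, hDφ, hDhalf, hhalf, ← smul_add,
      add_sub_cancel]
    norm_num
  have h1 : ∀ᵐ l ∂ρψ, M.p (proj ψ) l = 1 :=
    M.ae_p_eq_one hρψ hP (by rw [hDψ, proj_mul_self hψ, trace_proj hψ])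
  have h0 : ∀ᵐ l ∂ρφ, M.p (proj ψ) l = 0 :=
    M.ae_p_eq_zero hρφ hP (by rw [hDφ, sub_mul, one_mul, proj_mul_self hψ, sub_self, trace_zero])
  have hdet : ∀ᵐ l ∂ρhalf, M.p (proj ψ) l = 0 ∨ M.p (proj ψ) l = 1 := by
    rw [← hmix]
    exact ae_add_measure_iff.2
      ⟨Measure.ae_smul_measure (h1.mono fun _ => Or.inr) _,
        Measure.ae_smul_measure (h0.mono fun _ => Or.inl) _⟩
  rw [Measure.smul_apply, measure_mono_null (fun l hl => ?_) (ae_iff.1 hdet), smul_zero]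
  rintro (h | h) <;> simp [h] at hl
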